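/- The sequence b_n = 1/a_n - log n converges, and its limit equals γ + S, where S = ∑_{k=2}^{∞} a_{k-1}/(k(k - a_{k-1})) and γ is the Euler–Mascheroni constant. -/

import Mathlib

/-!
The recursion inverts exactly: `1 / (x (1 - x/m)) = 1/x + 1/m + x/(m (m - x))`. Hence `1/a_n`
telescopes to `H_n` plus the `n - 1`-th partial sum of `S`; after subtracting `log n` the harmonic
part tends to `γ` while the partial sums tend to `S`.
-/

open Filter Topology Finset Real

lemma one_div_mul_one_sub_div {x m : ℝ} (hx : x ≠ 0) (hm : m ≠ 0) (hxm : m - x ≠ 0) :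
    1 / (x * (1 - x / m)) = 1 / x + 1 / m + x / (m * (m - x)) := by
  field_simp
  ring

lemma mul_one_sub_div_mem_Ioc {x m : ℝ} (hx : x ∈ Set.Ioc 0 1) (hm : 1 < m) :
    x * (1 - x / m) ∈ Set.Ioc 0 1 := by
  obtain ⟨hx0, hx1⟩ := hx
  have hxm : 0 < x / m := by positivity
  have hxm1 : x / m < 1 := (div_lt_one (by linarith)).2 (by linarith)
  exact ⟨by nlinarith, by nlinarith⟩

lemma div_mul_sub_le_one_div_sub_one_sq {x m : ℝ} (hx1 : x ≤ 1) (hm : 1 < m) :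
    x / (m * (m - x)) ≤ 1 / (m - 1) ^ 2 := by
  rw [div_le_div_iff₀ (by nlinarith) (by nlinarith)]
  nlinarith [mul_le_mul_of_nonneg_left hx1 (sq_nonneg (m - 1))]

/-- The term of index `k + 2` of the series `S`. -/
noncomputable def correction (a : ℕ → ℝ) (k : ℕ) : ℝ :=
  a (k + 1) / ((k + 2 : ℝ) * ((k + 2 : ℝ) - a (k + 1)))

section Recurrence

variable {a : ℕ → ℝ}

lemma mem_Ioc_of_rec (ha1 : a 1 = 1)
    (hrec : ∀ n : ℕ, a (n + 2) = a (n + 1) * (1 - a (n + 1) / (n + 2))) (n : ℕ) :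
    a (n + 1) ∈ Set.Ioc 0 1 := by
  induction n with
  | zero => simp [ha1]
  | succ n ih =>
    rw [hrec]
    exact mul_one_sub_div_mem_Ioc ih (by linarith [n.cast_nonneg (α := ℝ)])

lemma one_div_eq_harmonic_add_sum_correction (ha1 : a 1 = 1)
    (hrec : ∀ n : ℕ, a (n + 2) = a (n + 1) * (1 - a (n + 1) / (n + 2))) (n : ℕ) :
    1 / a (n + 1) = harmonic (n + 1) + ∑ k ∈ range n, correction a k := by
  induction n with
  | zero => simp [ha1]
  | succ n ih =>
    obtain ⟨h0, h1⟩ := mem_Ioc_of_rec ha1 hrec n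
    have hn : (0 : ℝ) < n + 2 := by positivity
    rw [hrec, one_div_mul_one_sub_div h0.ne' hn.ne' (by linarith), ih, sum_range_succ,
      harmonic_succ (n + 1)]
    push_cast
    rw [correction]
    ring

lemma correction_nonneg (ha1 : a 1 = 1)
    (hrec : ∀ n : ℕ, a (n + 2) = a (n + 1) * (1 - a (n + 1) / (n + 2))) (k : ℕ) :
    0 ≤ correction a k := by
  obtain ⟨h0, h1⟩ := mem_Ioc_of_rec ha1 hrec k
  have : (0 : ℝ) < k + 2 - a (k + 1) := by linarith [k.cast_nonneg (α := ℝ)]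
  unfold correction
  positivity

lemma summable_correction (ha1 : a 1 = 1)
    (hrec : ∀ n : ℕ, a (n + 2) = a (n + 1) * (1 - a (n + 1) / (n + 2))) :
    Summable (correction a) := by
  have hsq : Summable fun k : ℕ => 1 / ((k : ℝ) + 1) ^ 2 := by
    simpa using (summable_nat_add_iff 1).mpr (Real.summable_one_div_nat_pow.mpr one_lt_two)
  refine Summable.of_nonneg_of_le (correction_nonneg ha1 hrec) (fun k => ?_) hsq
  have hk : (1 : ℝ) < k + 2 := by linarith [k.cast_nonneg (α := ℝ)]
  have := div_mul_sub_le_one_div_sub_one_sq (mem_Ioc_of_rec ha1 hrec k).2 hk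
  rw [correction]
  convert this using 3
  ring

end Recurrence

theorem stmt7 (a : ℕ → ℝ) (ha1 : a 1 = 1)
    (harec : ∀ n, 2 ≤ n → a n = a (n - 1) * (1 - a (n - 1) / n)) :
    Filter.Tendsto (fun n : ℕ => 1 / a n - Real.log n) Filter.atTop
      (𝓝 (Real.eulerMascheroniConstant +
        ∑' k : ℕ, a (k + 1) / ((k + 2 : ℝ) * ((k + 2 : ℝ) - a (k + 1))))) := by
  have hrec : ∀ n : ℕ, a (n + 2) = a (n + 1) * (1 - a (n + 1) / (n + 2)) := fun n => by
    simpa using harec (n + 2) (by omega)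
  have hsum : Tendsto (fun n => ∑ k ∈ range (n - 1), correction a k) atTop
      (𝓝 (∑' k, correction a k)) :=
    (summable_correction ha1 hrec).hasSum.tendsto_sum_nat.comp (tendsto_sub_atTop_nat 1)
  refine (tendsto_harmonic_sub_log.add hsum).congr' ?_
  filter_upwards [eventually_ge_atTop 1] with n hn
  obtain ⟨m, rfl⟩ := Nat.exists_eq_add_of_le' hn
  rw [one_div_eq_harmonic_add_sum_correction ha1 hrec m, Nat.add_sub_cancel]
  ring
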